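/- arXiv:2308.12763 — 10 statements merged into one kernel-verified Lean document; each statement's English description precedes it below -/
import Mathlib

section
/- A metric space does not contain a strictly increasing ω₁-indexed chain of compact subsets; that is, if ⟨H_α : α < ω₁⟩ is a family of compact subsets of a metric space with H_α ⊆ H_β for α < β, then the chain is not strict: there exist α < β with H_α = H_β. -/
/-!
If the chain were strict, pick `x α ∈ H (α + 1) \ H α` and `δ α > 0` with `ball (x α) (δ α)`
disjoint from `H α`; then `δ β ≤ dist (x α) (x β)` whenever `α < β`. As there are uncountably
many indices, some `ε > 0` is below infinitely many `δ α`. Countably many of these indices are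
bounded by some `γ < ω₁`, so the compact set `H γ` contains infinitely many `ε`-separated points.
-/

open Cardinal Ordinal Metric Set

theorem exists_pos_infinite_setOf_le {ι : Type*} [Uncountable ι] {f : ι → ℝ}
    (hf : ∀ i, 0 < f i) : ∃ ε > 0, {i | ε ≤ f i}.Infinite := by
  by_contra! hfin
  refine not_countable_univ ((countable_iUnion fun n : ℕ ↦
    (hfin (1 / (n + 1)) Nat.one_div_pos_of_nat).countable).mono fun i _ ↦ ?_)
  obtain ⟨n, hn⟩ := exists_nat_one_div_lt (hf i)
  exact mem_iUnion.2 ⟨n, hn.le⟩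

theorem IsCompact.exists_ne_and_dist_lt {X : Type*} [PseudoMetricSpace X] {K : Set X}
    (hK : IsCompact K) {u : ℕ → X} (hu : ∀ n, u n ∈ K) {ε : ℝ} (hε : 0 < ε) :
    ∃ m n, m ≠ n ∧ dist (u m) (u n) < ε := by
  obtain ⟨_, _, φ, hφ, hconv⟩ := hK.tendsto_subseq hu
  obtain ⟨N, hN⟩ := Metric.cauchySeq_iff.1 hconv.cauchySeq ε hε
  exact ⟨φ N, φ (N + 1), (hφ N.lt_succ_self).ne, hN N le_rfl (N + 1) N.le_succ⟩

theorem exists_apply_mem_of_forall_lt_apply_mem {ι X : Type*} [LinearOrder ι] [Uncountable ι]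
    [MetricSpace X] (hbdd : ∀ g : ℕ → ι, ∃ γ, ∀ n, g n < γ) {K : ι → Set X}
    (hK : ∀ i, IsCompact (K i)) {x : ι → X} (hx : ∀ i j, i < j → x i ∈ K j) :
    ∃ i, x i ∈ K i := by
  by_contra! hx_not
  have hball : ∀ i, ∃ δ > 0, ball (x i) δ ⊆ (K i)ᶜ := fun i ↦
    Metric.isOpen_iff.1 (hK i).isClosed.isOpen_compl _ (hx_not i)
  choose δ hδ_pos hδ using hball
  have hsep : ∀ i j, i < j → δ j ≤ dist (x i) (x j) := fun i j hij ↦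
    not_lt.1 fun h ↦ hδ j h (hx i j hij)
  obtain ⟨ε, hε, hinf⟩ := exists_pos_infinite_setOf_le hδ_pos
  set g : ℕ → ι := fun n ↦ hinf.natEmbedding _ n
  have hg : ∀ n, ε ≤ δ (g n) := fun n ↦ (hinf.natEmbedding _ n).2
  obtain ⟨γ, hγ⟩ := hbdd g
  obtain ⟨m, n, hmn, hdist⟩ := (hK γ).exists_ne_and_dist_lt (fun n ↦ hx _ _ (hγ n)) hε
  have hgmn : g m ≠ g n := fun h ↦ hmn ((hinf.natEmbedding _).injective (Subtype.ext h))
  rcases hgmn.lt_or_gt with h | h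
  · exact (hdist.trans_le ((hg n).trans (hsep _ _ h))).false
  · exact (hdist.trans_le ((hg m).trans (dist_comm (x (g m)) _ ▸ hsep _ _ h))).false

instance : Uncountable {o : Ordinal // o < (aleph 1).ord} := by
  rw [← aleph0_lt_mk_iff]
  change ℵ₀ < #(Iio _)
  simp [Cardinal.mk_Iio_ordinal]

theorem succ_lt_ord_aleph_one (α : {o : Ordinal // o < (aleph 1).ord}) :
    Order.succ α.1 < (aleph 1).ord :=
  (isSuccLimit_ord (aleph0_le_aleph 1)).succ_lt α.2

theorem exists_forall_lt_of_ord_aleph_one (g : ℕ → {o : Ordinal // o < (aleph 1).ord}) :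
    ∃ γ, ∀ n, g n < γ := by
  refine ⟨⟨⨆ n, Order.succ (g n).1, ?_⟩, fun n ↦ ?_⟩
  · refine lt_of_lt_of_eq (iSup_lt_omega_one fun n ↦ ?_) (ord_aleph 1).symm
    rw [← ord_aleph]
    exact succ_lt_ord_aleph_one (g n)
  · exact (Order.lt_succ (g n).1).trans_le (Ordinal.le_iSup (fun n ↦ Order.succ (g n).1) n)

/-- A metric space contains no strictly increasing ω₁-indexed chain of compact
subsets: any increasing ω₁-chain of compact sets fails to be strict. -/
theorem no_strict_omega1_chain_of_compacts {Y : Type*} [MetricSpace Y]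
    (H : {o : Ordinal // o < (Cardinal.aleph 1).ord} → Set Y)
    (hcpt : ∀ α, IsCompact (H α))
    (hmono : ∀ α β, α < β → H α ⊆ H β) :
    ∃ α β, α < β ∧ H α = H β := by
  by_contra! hne
  have hnew : ∀ α, ∃ y ∈ H ⟨_, succ_lt_ord_aleph_one α⟩, y ∉ H α := fun α ↦ exists_of_ssubset <|
    (hmono _ _ (Order.lt_succ α.1)).ssubset_of_ne (hne _ _ (Order.lt_succ α.1))
  choose x hx_succ hx_not using hnew
  obtain ⟨α, hα⟩ := exists_apply_mem_of_forall_lt_apply_mem exists_forall_lt_of_ord_aleph_one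
    hcpt (x := x) fun α β hαβ ↦
      monotone_iff_forall_lt.2 hmono (Order.succ_le_of_lt hαβ : _ ≤ β.1) (hx_succ α)
  exact hx_not α hα
end

section
/- Let f : X → Y be continuous with X countably compact and non-compact, f(X) compact, and Y C-closed. Let 𝒰 = {U_α : α ∈ κ} be a chain cover of X indexed by a cardinal κ ≥ ω₁ (U_α open, linearly ordered by inclusion, covering X, with X ⊄ U_α for each α). Then there exists c ∈ Y such that the preimage f⁻¹({c}) is not contained in any U_α. -/
/-!
The sets `f '' (U i)ᶜ` are images of closed subsets of a countably compact space, hence countably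
compact, hence closed in the C-closed space `Y`. They lie in the compact set `f '' univ` and form
a chain, so by Cantor's intersection theorem they share a point `c`; the fiber over `c` then meets
every `(U i)ᶜ`.
-/

/-- A subset `s` is countably compact if every countable open cover of `s`
has a finite subcover. -/
def CountablyCompactSet {X : Type*} [TopologicalSpace X] (s : Set X) : Prop :=
  ∀ U : ℕ → Set X, (∀ n, IsOpen (U n)) → s ⊆ ⋃ n, U n →
    ∃ t : Finset ℕ, s ⊆ ⋃ n ∈ t, U n

open Set

section

variable {X Y : Type*} [TopologicalSpace X] [TopologicalSpace Y]

theorem CountablyCompactSet.image {s : Set X} (hs : CountablyCompactSet s) {f : X → Y}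
    (hf : Continuous f) : CountablyCompactSet (f '' s) := by
  intro V hVo hsV
  obtain ⟨T, hT⟩ := hs (fun n => f ⁻¹' V n) (fun n => (hVo n).preimage hf)
    (by simpa [image_subset_iff] using hsV)
  exact ⟨T, by simpa [image_subset_iff] using hT⟩

theorem CountablyCompactSet.of_isClosed_subset {s t : Set X} (hs : CountablyCompactSet s)
    (ht : IsClosed t) (hts : t ⊆ s) : CountablyCompactSet t := by
  intro V hVo htV
  let W : ℕ → Set X := fun
    | 0 => tᶜ
    | n + 1 => V n
  have hsW : s ⊆ ⋃ n, W n := fun x _ => by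
    by_cases hx : x ∈ t
    · obtain ⟨n, hn⟩ := mem_iUnion.1 (htV hx)
      exact mem_iUnion.2 ⟨n + 1, hn⟩
    · exact mem_iUnion.2 ⟨0, hx⟩
  obtain ⟨T, hT⟩ := hs W (by rintro (_ | n); exacts [ht.isOpen_compl, hVo n]) hsW
  refine ⟨T.image Nat.pred, fun x hx => ?_⟩
  obtain ⟨n, hnT, hxn⟩ := mem_iUnion₂.1 (hT (hts hx))
  cases n with
  | zero => exact absurd hx hxn
  | succ n => exact mem_iUnion₂.2 ⟨n, Finset.mem_image_of_mem Nat.pred hnT, hxn⟩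

end

theorem exists_forall_fiber_inter_nonempty {X Y ι : Type*} [TopologicalSpace Y] [Nonempty ι]
    {f : X → Y} {K : Set Y} (hK : IsCompact K) {A : ι → Set X} (hdir : Directed (· ⊇ ·) A)
    (hne : ∀ i, (A i).Nonempty) (hcl : ∀ i, IsClosed (f '' A i)) (hAK : ∀ i, f '' A i ⊆ K) :
    ∃ c, ∀ i, (f ⁻¹' {c} ∩ A i).Nonempty := by
  obtain ⟨c, hc⟩ := IsCompact.nonempty_iInter_of_directed_nonempty_isCompact_isClosed
    (fun i => f '' A i) (hdir.mono_comp (· ⊇ ·) (g := (f '' ·)) fun _ _ h => image_mono h)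
    (fun i => (hne i).image f) (fun i => hK.of_isClosed_subset (hcl i) (hAK i)) hcl
  refine ⟨c, fun i => ?_⟩
  obtain ⟨x, hx, rfl⟩ := mem_iInter.1 hc i
  exact ⟨x, rfl, hx⟩

theorem exists_unbounded_fiber_general {X Y : Type*} [TopologicalSpace X] [TopologicalSpace Y]
    (hX : CountablyCompactSet (Set.univ : Set X))
    (hY : ∀ s : Set Y, CountablyCompactSet s → IsClosed s)
    (f : X → Y) (hf : Continuous f) (hfX : IsCompact (f '' Set.univ))
    {ι : Type*} (hcard : Cardinal.aleph 1 ≤ Cardinal.mk ι)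
    (U : ι → Set X) (hUo : ∀ i, IsOpen (U i))
    (hchain : ∀ i j, U i ⊆ U j ∨ U j ⊆ U i)
    (hproper : ∀ i, U i ≠ Set.univ) :
    ∃ c : Y, ∀ i, ¬ f ⁻¹' {c} ⊆ U i := by
  have : Nonempty ι := Cardinal.mk_ne_zero_iff.1 ((Cardinal.aleph_pos 1).trans_le hcard).ne'
  have hdir : Directed (· ⊇ ·) fun i => (U i)ᶜ := fun i j => (hchain i j).elim
    (fun h => ⟨j, compl_subset_compl.2 h, subset_rfl⟩)
    (fun h => ⟨i, subset_rfl, compl_subset_compl.2 h⟩)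
  have hclosed : ∀ i, IsClosed (f '' (U i)ᶜ) := fun i =>
    hY _ ((hX.of_isClosed_subset (hUo i).isClosed_compl (subset_univ _)).image hf)
  obtain ⟨c, hc⟩ := exists_forall_fiber_inter_nonempty hfX hdir
    (fun i => nonempty_compl.2 (hproper i)) hclosed (fun i => image_mono (subset_univ _))
  exact ⟨c, fun i hsub => let ⟨_, hxc, hxU⟩ := hc i; hxU (hsub hxc)⟩

/-- If `X` is countably compact non-compact, `f : X → Y` is continuous with
compact image, `Y` is C-closed, and `U` is a nontrivial chain cover of `X`
indexed by a set of cardinality at least `ℵ₁`, then some fiber of `f` is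
`U`-unbounded. -/
theorem exists_unbounded_fiber {X Y : Type*} [TopologicalSpace X] [TopologicalSpace Y]
    (hX : CountablyCompactSet (Set.univ : Set X))
    (hXnc : ¬ IsCompact (Set.univ : Set X))
    (hY : ∀ s : Set Y, CountablyCompactSet s → IsClosed s)
    (f : X → Y) (hf : Continuous f) (hfX : IsCompact (f '' Set.univ))
    {ι : Type*} (hcard : Cardinal.aleph 1 ≤ Cardinal.mk ι)
    (U : ι → Set X) (hUo : ∀ i, IsOpen (U i))
    (hchain : ∀ i j, U i ⊆ U j ∨ U j ⊆ U i)
    (hcov : (⋃ i, U i) = Set.univ)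
    (hproper : ∀ i, U i ≠ Set.univ) :
    ∃ c : Y, ∀ i, ¬ f ⁻¹' {c} ⊆ U i :=
  exists_unbounded_fiber_general hX hY f hf hfX hcard U hUo hchain hproper
end

section
/- Let X be a Tychonoff pseudocompact space and U an open subset of X. Then the closure of U in X is pseudocompact. -/
/-- A subset `s` is pseudocompact if every continuous real-valued function on the
subspace `s` is bounded. -/
def PseudocompactSet {X : Type*} [TopologicalSpace X] (s : Set X) : Prop :=
  ∀ g : s → ℝ, Continuous g → ∃ M : ℝ, ∀ x, |g x| ≤ M

open Set Function

-- feeble compactness from pseudocompactness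
lemma feebly {X : Type*} [TopologicalSpace X] [CompletelyRegularSpace X] [T2Space X]
    (hX : PseudocompactSet (Set.univ : Set X))
    (V : ℕ → Set X) (hopen : ∀ n, IsOpen (V n)) (hne : ∀ n, (V n).Nonempty) :
    ¬ LocallyFinite V := by
  intro hlf
  choose x hx using hne
  have key : ∀ n, ∃ f : X → ℝ, Continuous f ∧ f (x n) = 1 ∧ (∀ y, 0 ≤ f y ∧ f y ≤ 1) ∧
      ∀ y ∉ V n, f y = 0 := by
    intro n
    obtain ⟨f, cf, hf0, hf1⟩ := CompletelyRegularSpace.completely_regular (x n) (V n)ᶜ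
      (hopen n).isClosed_compl (by simp [hx n])
    refine ⟨fun y => 1 - (f y : ℝ), by continuity, by simp [hf0], ?_, ?_⟩
    · intro y
      constructor
      · simpa using (f y).2.2
      · simpa using (f y).2.1
    · intro y hy
      have := hf1 hy
      simp [this]
  choose f cf hf1 hf01 hf0 using key
  set F : X → ℝ := fun p => ∑ᶠ n : ℕ, (n : ℝ) * f n p with hF
  have hsupp : ∀ n : ℕ, support (fun p => (n : ℝ) * f n p) ⊆ V n := by
    intro n p hp
    by_contra h
    exact hp (by simp [hf0 n p h])
  have hlf' : LocallyFinite fun n : ℕ => support (fun p => (n : ℝ) * f n p) :=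
    hlf.subset hsupp
  have hFc : Continuous F := continuous_finsum (fun n => (continuous_const.mul (cf n))) hlf'
  obtain ⟨M, hM⟩ := hX (fun p => F p.val) (hFc.comp continuous_subtype_val)
  obtain ⟨n, hn⟩ := exists_nat_gt (max M 0)
  have hn0 : (0:ℝ) < n := lt_of_le_of_lt (le_max_right _ _) hn
  -- evaluate F (x n)
  have hfin : (support fun i : ℕ => (i : ℝ) * f i (x n)).Finite := by
    obtain ⟨t, ht, hft⟩ := hlf (x n)
    apply hft.subset
    intro i hi
    have hxi : x n ∈ V i := hsupp i (by simpa using hi)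
    exact ⟨x n, hxi, mem_of_mem_nhds ht⟩
  have hmem : n ∈ hfin.toFinset := by
    simp only [Finite.mem_toFinset, mem_support]
    rw [hf1 n]
    simpa using hn0.ne'
  have hFx : (n : ℝ) ≤ F (x n) := by
    have := finsum_eq_sum (fun i : ℕ => (i : ℝ) * f i (x n)) hfin
    rw [hF]
    simp only
    rw [this]
    calc (n : ℝ) = (n : ℝ) * f n (x n) := by rw [hf1 n]; ring
    _ ≤ ∑ i ∈ hfin.toFinset, (i : ℝ) * f i (x n) := by
        apply Finset.single_le_sum (f := fun i : ℕ => (i : ℝ) * f i (x n)) _ hmem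
        intro i _
        exact mul_nonneg (Nat.cast_nonneg i) (hf01 i _).1
  have := hM ⟨x n, mem_univ _⟩
  have : F (x n) ≤ M := le_trans (le_abs_self _) this
  have : (n : ℝ) ≤ M := le_trans hFx this
  exact absurd this (not_le.mpr (lt_of_le_of_lt (le_max_left _ _) hn))

/-- In a Tychonoff pseudocompact space, the closure of any open set is
pseudocompact. -/
theorem pseudocompact_closure_of_open {X : Type*} [TopologicalSpace X]
    [CompletelyRegularSpace X] [T2Space X]
    (hX : PseudocompactSet (Set.univ : Set X))
    {U : Set X} (hU : IsOpen U) :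
    PseudocompactSet (closure U) := by
  intro g hg
  by_contra hbd
  push_neg at hbd
  -- for each n, there is y in closure U with |g y| > n
  have hy : ∀ n : ℕ, ∃ y : closure U, (n : ℝ) < |g y| := by
    intro n
    obtain ⟨y, hy⟩ := hbd n
    exact ⟨y, hy⟩
  -- W n open in subspace
  have hWopen : ∀ n : ℕ, ∃ O : Set X, IsOpen O ∧
      {y : closure U | (n : ℝ) < |g y|} = Subtype.val ⁻¹' O := by
    intro n
    have : IsOpen {y : closure U | (n : ℝ) < |g y|} := by
      have : Continuous fun y : closure U => |g y| := hg.abs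
      exact isOpen_lt continuous_const this
    obtain ⟨O, hO, hOe⟩ := isOpen_induced_iff.mp this
    exact ⟨O, hO, hOe.symm⟩
  choose O hOopen hOeq using hWopen
  set V : ℕ → Set X := fun n => O n ∩ U with hV
  have hVopen : ∀ n, IsOpen (V n) := fun n => (hOopen n).inter hU
  have hVne : ∀ n, (V n).Nonempty := by
    intro n
    obtain ⟨y, hyg⟩ := hy n
    have hyO : (y : X) ∈ O n := by
      have : y ∈ {y : closure U | (n : ℝ) < |g y|} := hyg
      rw [hOeq n] at this
      exact this
    have : ((O n) ∩ U).Nonempty := by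
      have hyc : (y : X) ∈ closure U := y.2
      exact mem_closure_iff.mp hyc (O n) (hOopen n) hyO
    exact this
  have hVlf : LocallyFinite V := by
    intro z
    by_cases hz : z ∈ closure U
    · -- |g ⟨z⟩| < N for some N
      obtain ⟨N, hN⟩ := exists_nat_gt (|g ⟨z, hz⟩|)
      have : IsOpen {y : closure U | |g y| < (N : ℝ)} := by
        exact isOpen_lt hg.abs continuous_const
      obtain ⟨P, hP, hPe⟩ := isOpen_induced_iff.mp this
      have hzP : z ∈ P := by
        have : (⟨z, hz⟩ : closure U) ∈ {y : closure U | |g y| < (N : ℝ)} := hN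
        rw [← hPe] at this
        exact this
      refine ⟨P, hP.mem_nhds hzP, (Set.finite_Iio N).subset ?_⟩
      intro n hn
      obtain ⟨w, ⟨hwO, hwU⟩, hwP⟩ := hn
      have hwc : w ∈ closure U := subset_closure hwU
      have h1 : (n : ℝ) < |g ⟨w, hwc⟩| := by
        have : (⟨w, hwc⟩ : closure U) ∈ Subtype.val ⁻¹' O n := hwO
        rw [← hOeq n] at this
        exact this
      have h2 : |g ⟨w, hwc⟩| < (N : ℝ) := by
        have : (⟨w, hwc⟩ : closure U) ∈ Subtype.val ⁻¹' P := hwP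
        rw [hPe] at this
        exact this
      have : (n : ℝ) < (N : ℝ) := h1.trans h2
      exact_mod_cast this
    · refine ⟨(closure U)ᶜ, isClosed_closure.isOpen_compl.mem_nhds hz, ?_⟩
      convert Set.finite_empty
      ext n
      simp only [mem_setOf_eq, mem_empty_iff_false, iff_false]
      rintro ⟨w, ⟨_, hwU⟩, hwc⟩
      exact hwc (subset_closure hwU)
  exact feebly hX V hVopen hVne hVlf
end

section
/- Suppose X is a topological space in which for every continuous f : X → ℝ there exists y ∈ ℝ such that f⁻¹(ℝ \ {y}) is contained in a Lindelöf subset of X. Then given any two disjoint closed subsets A, B of X such that A = f⁻¹({0}) for some continuous f : X → ℝ and B = g⁻¹({0}) for some continuous g : X → ℝ (i.e., A and B are zero-sets), at least one of A, B is Lindelöf. -/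
/-- If every continuous real-valued function on `X` is "eventually constant"
(constant outside a Lindelöf set: the preimage of the complement of some value
is contained in a Lindelöf set), then of any two disjoint zero-sets of `X`, at
least one is Lindelöf. -/
theorem ec_implies_I0 {X : Type*} [TopologicalSpace X]
    (hEC : ∀ f : X → ℝ, Continuous f →
      ∃ y : ℝ, ∃ Z : Set X, IsLindelof Z ∧ f ⁻¹' {y}ᶜ ⊆ Z)
    (A B : Set X) (f g : X → ℝ) (hf : Continuous f) (hg : Continuous g)
    (hA : A = f ⁻¹' {0}) (hB : B = g ⁻¹' {0}) (hAB : Disjoint A B) :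
    IsLindelof A ∨ IsLindelof B := by
  subst hA hB
  have hd : ∀ x : X, |f x| + |g x| ≠ 0 := by
    intro x hx
    have h1 : |f x| = 0 ∧ |g x| = 0 := by
      constructor <;> nlinarith [abs_nonneg (f x), abs_nonneg (g x)]
    exact hAB.le_bot ⟨abs_eq_zero.mp h1.1, abs_eq_zero.mp h1.2⟩
  set h : X → ℝ := fun x => |f x| / (|f x| + |g x|) with hh
  have hcont : Continuous h := (hf.abs).div (hf.abs.add hg.abs) hd
  obtain ⟨y, Z, hZ, hsub⟩ := hEC h hcont
  have hAclosed : IsClosed (f ⁻¹' {0}) := isClosed_singleton.preimage hf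
  have hBclosed : IsClosed (g ⁻¹' {0}) := isClosed_singleton.preimage hg
  by_cases hy : y = 0
  · right
    refine hZ.of_isClosed_subset hBclosed ?_
    intro x hx
    apply hsub
    have hgx : g x = 0 := hx
    have hfx : f x ≠ 0 := by
      intro h0; exact hAB.le_bot ⟨h0, hgx⟩
    have : h x = 1 := by
      simp [hh, hgx, abs_eq_zero, hfx]
    simp [this, hy]
  · left
    refine hZ.of_isClosed_subset hAclosed ?_
    intro x hx
    apply hsub
    have hfx : f x = 0 := hx
    have : h x = 0 := by simp [hh, hfx]
    simp [this, Ne.symm hy]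
end

section
/- Let X be a topological space in which any two disjoint zero-sets cannot both be non-Lindelöf (property I0). Then for every continuous map f from X to a metric space Y, the image f(X) has countable spread, i.e., every closed discrete subspace of f(X) is at most countable; consequently f(X) is hereditarily Lindelöf. -/
open Metric Set

/-- An `ε`-separated subset of a Lindelöf set in a metric space is countable. -/
lemma sep_countable_of_lindelof {Y : Type*} [MetricSpace Y] {K D : Set Y}
    (hK : IsLindelof K) (hDK : D ⊆ K) {ε : ℝ} (hε : 0 < ε)
    (hsep : ∀ a ∈ D, ∀ b ∈ D, a ≠ b → ε ≤ dist a b) : D.Countable := by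
  classical
  obtain ⟨t, htc, htcov⟩ := hK.elim_countable_subcover (fun y : Y => ball y (ε / 2))
    (fun y => isOpen_ball) (fun x _ => mem_iUnion.2 ⟨x, mem_ball_self (by linarith)⟩)
  have hex : ∀ d ∈ D, ∃ y ∈ t, d ∈ ball y (ε / 2) := fun d hd => by
    simpa using htcov (hDK hd)
  set c : Y → Y := fun d =>
    if h : ∃ y ∈ t, d ∈ ball y (ε / 2) then h.choose else d with hc
  have hct : ∀ d ∈ D, c d ∈ t ∧ d ∈ ball (c d) (ε / 2) := by
    intro d hd
    have h := hex d hd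
    simp only [hc, dif_pos h]
    exact ⟨h.choose_spec.1, h.choose_spec.2⟩
  have hinj : InjOn c D := by
    intro a ha b hb hab
    by_contra hne
    have h1 := mem_ball.1 (hct a ha).2
    have h2 := mem_ball.1 (hct b hb).2
    rw [hab] at h1
    have h3 := hsep a ha b hb hne
    have h4 : dist a b ≤ dist a (c b) + dist (c b) b := dist_triangle _ _ _
    rw [dist_comm (c b) b] at h4
    linarith
  exact Set.countable_of_injective_of_countable_image hinj
    (htc.mono (by rintro y ⟨d, hd, rfl⟩; exact (hct d hd).1))

/-- Under property I0, every `ε`-separated subset of the range of a continuous map into a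
metric space is countable. -/
lemma key_sep_countable {X Y : Type*} [TopologicalSpace X] [MetricSpace Y]
    (hI0 : ∀ (f g : X → ℝ), Continuous f → Continuous g →
      Disjoint (f ⁻¹' {0}) (g ⁻¹' {0}) →
      IsLindelof (f ⁻¹' {0}) ∨ IsLindelof (g ⁻¹' {0}))
    (f : X → Y) (hf : Continuous f) {ε : ℝ} (hε : 0 < ε) {D : Set Y}
    (hD : D ⊆ Set.range f)
    (hsep : ∀ a ∈ D, ∀ b ∈ D, a ≠ b → ε ≤ dist a b) : D.Countable := by
  by_contra hunc
  -- split `D` into two disjoint uncountable pieces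
  have hinf : (Cardinal.aleph0 : Cardinal) ≤ Cardinal.mk D := by
    by_contra h
    push_neg at h
    exact hunc (Set.countable_coe_iff.mp (Cardinal.mk_le_aleph0_iff.mp h.le))
  have hcard : Cardinal.mk (↥D ⊕ ↥D) = Cardinal.mk ↥D := by
    simp [Cardinal.add_eq_self hinf]
  obtain ⟨e⟩ := Cardinal.eq.1 hcard
  set D1 : Set Y := Set.range (fun a : ↥D => (e (Sum.inl a) : Y)) with hD1def
  set D2 : Set Y := Set.range (fun a : ↥D => (e (Sum.inr a) : Y)) with hD2def
  have hD1sub : D1 ⊆ D := by rintro y ⟨a, rfl⟩; exact (e (Sum.inl a)).2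
  have hD2sub : D2 ⊆ D := by rintro y ⟨a, rfl⟩; exact (e (Sum.inr a)).2
  have huncount : ∀ (i : Bool),
      ¬ (Set.range (fun a : ↥D => (e (if i then Sum.inl a else Sum.inr a) : Y))).Countable := by
    intro i hcnt
    apply hunc
    have hcnt' : Countable ↥(Set.range
        (fun a : ↥D => (e (if i then Sum.inl a else Sum.inr a) : Y))) := hcnt.to_subtype
    have hinj : Function.Injective
        (fun a : ↥D => (e (if i then Sum.inl a else Sum.inr a) : Y)) := by
      intro a b hab
      have := Subtype.val_injective hab
      have := e.injective this
      cases i <;> simpa using this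
    have : Countable ↥D := by
      have hmap : Function.Injective (fun a : ↥D =>
          (⟨(e (if i then Sum.inl a else Sum.inr a) : Y), Set.mem_range_self a⟩ :
            ↥(Set.range (fun a : ↥D => (e (if i then Sum.inl a else Sum.inr a) : Y))))) := by
        intro a b hab
        exact hinj (Subtype.mk_eq_mk.mp hab)
      exact hmap.countable
    exact Set.countable_coe_iff.mp this
  have hun1 : ¬ D1.Countable := by simpa using huncount true
  have hun2 : ¬ D2.Countable := by simpa using huncount false
  have hne1 : D1.Nonempty :=
    Set.nonempty_iff_ne_empty.2 fun h => hun1 (h ▸ Set.countable_empty)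
  have hne2 : D2.Nonempty :=
    Set.nonempty_iff_ne_empty.2 fun h => hun2 (h ▸ Set.countable_empty)
  have hdisj : Disjoint D1 D2 := by
    rw [Set.disjoint_left]
    rintro y ⟨a, rfl⟩ ⟨b, hb⟩
    have := Subtype.val_injective hb
    have := e.injective this
    simp at this
  -- the two zero sets
  set g1 : X → ℝ := fun x => max (infDist (f x) D1 - ε / 4) 0 with hg1def
  set g2 : X → ℝ := fun x => max (infDist (f x) D2 - ε / 4) 0 with hg2def
  have hg1c : Continuous g1 :=
    (((continuous_infDist_pt D1).comp hf).sub continuous_const).max continuous_const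
  have hg2c : Continuous g2 :=
    (((continuous_infDist_pt D2).comp hf).sub continuous_const).max continuous_const
  have hz1 : g1 ⁻¹' {0} = {x | infDist (f x) D1 ≤ ε / 4} := by
    ext x; simp [hg1def, max_eq_right_iff, sub_nonpos]
  have hz2 : g2 ⁻¹' {0} = {x | infDist (f x) D2 ≤ ε / 4} := by
    ext x; simp [hg2def, max_eq_right_iff, sub_nonpos]
  have hzdisj : Disjoint (g1 ⁻¹' {0}) (g2 ⁻¹' {0}) := by
    rw [hz1, hz2, Set.disjoint_left]
    intro x hx1 hx2
    have h1 : infDist (f x) D1 < ε / 3 := lt_of_le_of_lt hx1 (by linarith)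
    have h2 : infDist (f x) D2 < ε / 3 := lt_of_le_of_lt hx2 (by linarith)
    obtain ⟨d1, hd1, hdist1⟩ := (infDist_lt_iff hne1).1 h1
    obtain ⟨d2, hd2, hdist2⟩ := (infDist_lt_iff hne2).1 h2
    have hne : d1 ≠ d2 := fun h => Set.disjoint_left.1 hdisj hd1 (h ▸ hd2)
    have := hsep d1 (hD1sub hd1) d2 (hD2sub hd2) hne
    have h4 : dist d1 d2 ≤ dist d1 (f x) + dist (f x) d2 := dist_triangle _ _ _
    rw [dist_comm d1 (f x)] at h4
    linarith
  -- if the zero set around `Di` is Lindelöf then `Di` is countable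
  have main : ∀ Di : Set Y, Di ⊆ D → IsLindelof {x | infDist (f x) Di ≤ ε / 4} →
      Di.Countable := by
    intro Di hsub hL
    refine sep_countable_of_lindelof (hL.image hf) ?_ hε
      (fun a ha b hb hab => hsep a (hsub ha) b (hsub hb) hab)
    intro d hd
    obtain ⟨x, rfl⟩ := hD (hsub hd)
    refine ⟨x, ?_, rfl⟩
    have h0 : infDist (f x) Di ≤ dist (f x) (f x) := infDist_le_dist_of_mem hd
    simp only [dist_self] at h0
    exact h0.trans (by positivity)
  rcases hI0 g1 g2 hg1c hg2c hzdisj with hL | hL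
  · exact hun1 (main D1 hD1sub (hz1 ▸ hL))
  · exact hun2 (main D2 hD2sub (hz2 ▸ hL))

/-- If `X` satisfies property I0 (of any two disjoint zero-sets, at least one is
Lindelöf), then for any continuous map `f` to a metric space `Y`, the image
`f(X)` has countable spread and is hereditarily Lindelöf. -/
theorem I0_implies_image_countable_spread {X Y : Type*} [TopologicalSpace X] [MetricSpace Y]
    (hI0 : ∀ (f g : X → ℝ), Continuous f → Continuous g →
      Disjoint (f ⁻¹' {0}) (g ⁻¹' {0}) →
      IsLindelof (f ⁻¹' {0}) ∨ IsLindelof (g ⁻¹' {0}))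
    (f : X → Y) (hf : Continuous f) :
    (∀ D : Set (f '' Set.univ : Set Y), IsClosed D → DiscreteTopology D → D.Countable) ∧
      HereditarilyLindelofSpace (f '' Set.univ : Set Y) := by
  classical
  set S : Set Y := f '' Set.univ with hSdef
  have hSrange : S ⊆ Set.range f := by
    rintro y ⟨x, -, rfl⟩; exact ⟨x, rfl⟩
  -- second countability of the image via maximal separated sets
  have hsc : SecondCountableTopology ↥S := by
    apply Metric.secondCountable_of_almost_dense_set
    intro ε hε
    have hzorn : ∀ c ⊆ {T : Set Y | T ⊆ S ∧ ∀ a ∈ T, ∀ b ∈ T, a ≠ b → ε ≤ dist a b},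
        IsChain (· ⊆ ·) c → ∃ ub ∈ {T : Set Y | T ⊆ S ∧ ∀ a ∈ T, ∀ b ∈ T, a ≠ b → ε ≤ dist a b},
          ∀ s ∈ c, s ⊆ ub := by
      intro c hcS hchain
      refine ⟨⋃₀ c, ⟨Set.sUnion_subset fun T hT => (hcS hT).1, ?_⟩,
        fun s hs => Set.subset_sUnion_of_mem hs⟩
      rintro a ⟨T1, hT1, ha⟩ b ⟨T2, hT2, hb⟩ hab
      rcases hchain.total hT1 hT2 with h | h
      · exact (hcS hT2).2 a (h ha) b hb hab
      · exact (hcS hT1).2 a ha b (h hb) hab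
    obtain ⟨M, hM⟩ := zorn_subset
      {T : Set Y | T ⊆ S ∧ ∀ a ∈ T, ∀ b ∈ T, a ≠ b → ε ≤ dist a b} hzorn
    have hMS : M ⊆ S := hM.prop.1
    have hMsep := hM.prop.2
    have hMc : M.Countable :=
      key_sep_countable hI0 f hf hε (fun y hy => hSrange (hMS hy)) hMsep
    have hdense : ∀ y ∈ S, ∃ m ∈ M, dist y m ≤ ε := by
      intro y hy
      by_contra hcon
      push_neg at hcon
      have hins : insert y M ∈
          {T : Set Y | T ⊆ S ∧ ∀ a ∈ T, ∀ b ∈ T, a ≠ b → ε ≤ dist a b} := by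
        refine ⟨Set.insert_subset hy hMS, ?_⟩
        intro a ha b hb hab
        rcases ha with rfl | ha
        · rcases hb with rfl | hb
          · exact absurd rfl hab
          · exact (hcon b hb).le
        · rcases hb with rfl | hb
          · rw [dist_comm]; exact (hcon a ha).le
          · exact hMsep a ha b hb hab
      have hyM : y ∈ M := hM.2 hins (Set.subset_insert y M) (Set.mem_insert y M)
      have := hcon y hyM
      simp at this
      linarith
    refine ⟨Subtype.val ⁻¹' M, hMc.preimage Subtype.val_injective, ?_⟩
    intro x
    obtain ⟨m, hm, hdist⟩ := hdense x.1 x.2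
    exact ⟨⟨m, hMS hm⟩, hm, by rw [Subtype.dist_eq]; exact hdist⟩
  haveI := hsc
  have hher : HereditarilyLindelofSpace ↥S := inferInstance
  refine ⟨?_, hher⟩
  intro D hDc hDd
  have hL : IsLindelof D := HereditarilyLindelof_LindelofSets D
  -- isolation neighbourhoods from discreteness
  have hiso : ∀ x : ↥D, ∃ U : Set ↥S, IsOpen U ∧ U ∩ D = {(x : ↥S)} := by
    intro x
    have hopen : IsOpen ({x} : Set ↥D) := isOpen_discrete _
    rw [isOpen_induced_iff] at hopen
    obtain ⟨U, hU, hUeq⟩ := hopen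
    refine ⟨U, hU, ?_⟩
    ext y
    constructor
    · rintro ⟨hyU, hyD⟩
      have : (⟨y, hyD⟩ : ↥D) ∈ Subtype.val ⁻¹' U := hyU
      rw [hUeq] at this
      simpa [Subtype.ext_iff] using this
    · rintro rfl
      have : x ∈ ({x} : Set ↥D) := rfl
      rw [← hUeq] at this
      exact ⟨this, x.2⟩
  choose U hUo hUeq using hiso
  have hcover : D ⊆ ⋃ x : ↥D, U x := by
    intro d hd
    refine Set.mem_iUnion.2 ⟨⟨d, hd⟩, ?_⟩
    have : (d : ↥S) ∈ ({((⟨d, hd⟩ : ↥D) : ↥S)} : Set ↥S) := rfl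
    rw [← hUeq ⟨d, hd⟩] at this
    exact this.1
  obtain ⟨t, htc, htcov⟩ := hL.elim_countable_subcover U hUo hcover
  have hsub : D ⊆ Subtype.val '' t := by
    intro d hd
    obtain ⟨x, hxt, hdU⟩ := Set.mem_iUnion₂.mp (htcov hd)
    have : d ∈ U x ∩ D := ⟨hdU, hd⟩
    rw [hUeq x] at this
    rw [this]
    exact ⟨x, hxt, rfl⟩
  exact ((htc.image Subtype.val).mono hsub)
end

section
/- Let X be a normal topological space satisfying: given any two disjoint zero-sets, at least one is Lindelöf (property I0). Then given any two disjoint closed subsets of X, at least one is Lindelöf (property IC). -/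
/-- In a normal space, if of any two disjoint zero-sets at least one is Lindelöf
(property I0), then of any two disjoint closed sets at least one is Lindelöf
(property IC). -/
theorem I0_implies_IC_of_normal {X : Type*} [TopologicalSpace X] [NormalSpace X]
    (hI0 : ∀ (f g : X → ℝ), Continuous f → Continuous g →
      Disjoint (f ⁻¹' {0}) (g ⁻¹' {0}) →
      IsLindelof (f ⁻¹' {0}) ∨ IsLindelof (g ⁻¹' {0})) :
    ∀ A B : Set X, IsClosed A → IsClosed B → Disjoint A B →
      IsLindelof A ∨ IsLindelof B := by
  intro A B hA hB hAB
  obtain ⟨u, hu0, hu1, -⟩ := exists_continuous_zero_one_of_isClosed hA hB hAB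
  set f : X → ℝ := fun x => u x with hf
  set g : X → ℝ := fun x => u x - 1 with hg
  have hfc : Continuous f := u.continuous
  have hgc : Continuous g := u.continuous.sub continuous_const
  have hdisj : Disjoint (f ⁻¹' {0}) (g ⁻¹' {0}) := by
    rw [Set.disjoint_left]
    intro x hx hx'
    simp only [hf, hg, Set.mem_preimage, Set.mem_singleton_iff, sub_eq_zero] at hx hx'
    rw [hx] at hx'; norm_num at hx'
  have hAf : A ⊆ f ⁻¹' {0} := fun x hx => by
    simp [hf, hu0 hx]
  have hBg : B ⊆ g ⁻¹' {0} := fun x hx => by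
    simp [hg, hu1 hx]
  rcases hI0 f g hfc hgc hdisj with h | h
  · exact Or.inl (h.of_isClosed_subset hA hAf)
  · exact Or.inr (h.of_isClosed_subset hB hBg)
end

section
/- Let X be a topological space with the property that given any two disjoint closed subsets, at least one is Lindelöf (property IC). Then any two closed non-Lindelöf subsets of X have non-Lindelöf intersection. -/
open Set

lemma exists_open_superset_diff_nonLindelof {X : Type u} [TopologicalSpace X]
    {E D : Set X} (hE : IsLindelof E) (hED : E ⊆ D) (hD : ¬ IsLindelof D) :
    ∃ U : Set X, IsOpen U ∧ E ⊆ U ∧ ¬ IsLindelof (D \ U) := by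
  by_contra h
  push_neg at h
  apply hD
  apply isLindelof_of_countable_subcover
  intro ι U hUo hsU
  obtain ⟨t, htc, htE⟩ := hE.elim_countable_subcover U hUo (hED.trans hsU)
  have hVo : IsOpen (⋃ i ∈ t, U i) := isOpen_biUnion fun i _ ↦ hUo i
  have hL : IsLindelof (D \ ⋃ i ∈ t, U i) := h _ hVo htE
  obtain ⟨t', ht'c, ht'⟩ := hL.elim_countable_subcover U hUo (diff_subset.trans hsU)
  refine ⟨t ∪ t', htc.union ht'c, fun x hx ↦ ?_⟩
  by_cases hxV : x ∈ ⋃ i ∈ t, U i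
  · obtain ⟨i, hi, hxi⟩ := mem_iUnion₂.mp hxV
    exact mem_iUnion₂.mpr ⟨i, Or.inl hi, hxi⟩
  · obtain ⟨i, hi, hxi⟩ := mem_iUnion₂.mp (ht' ⟨hx, hxV⟩)
    exact mem_iUnion₂.mpr ⟨i, Or.inr hi, hxi⟩

/-- If of any two disjoint closed subsets of `X` at least one is Lindelöf
(property IC), then any two closed non-Lindelöf subsets of `X` have
non-Lindelöf intersection. -/
theorem IC_implies_nonLindelof_inter {X : Type*} [TopologicalSpace X]
    (hIC : ∀ A B : Set X, IsClosed A → IsClosed B → Disjoint A B →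
      IsLindelof A ∨ IsLindelof B)
    {C₁ C₂ : Set X} (h₁ : IsClosed C₁) (h₂ : IsClosed C₂)
    (hn₁ : ¬ IsLindelof C₁) (hn₂ : ¬ IsLindelof C₂) :
    ¬ IsLindelof (C₁ ∩ C₂) := by
  intro hE
  obtain ⟨U, hUo, hEU, hU⟩ :=
    exists_open_superset_diff_nonLindelof hE inter_subset_left hn₁
  obtain ⟨V, hVo, hEV, hV⟩ :=
    exists_open_superset_diff_nonLindelof hE inter_subset_right hn₂
  have hdisj : Disjoint (C₁ \ U) (C₂ \ V) := by
    rw [disjoint_left]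
    rintro x ⟨hx1, hxU⟩ ⟨hx2, _⟩
    exact hxU (hEU ⟨hx1, hx2⟩)
  rcases hIC _ _ (h₁.sdiff hUo) (h₂.sdiff hVo) hdisj with h | h
  · exact hU h
  · exact hV h
end

section
/- Let X be a normal space such that every continuous real-valued function on X is constant outside some Lindelöf subset (property EC(X,ℝ)). Then X is ω₁-compact: every closed discrete subspace of X is at most countable. -/
open Set

/-- Any subset of a closed discrete subspace is closed. -/
lemma aux_subset_closed {X : Type*} [TopologicalSpace X] {D : Set X} (hD : IsClosed D)
    [DiscreteTopology D] {S : Set X} (hS : S ⊆ D) : IsClosed S := by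
  have h : S = Subtype.val '' ((Subtype.val ⁻¹' S : Set D)) := by
    rw [Set.image_preimage_eq_inter_range, Subtype.range_val]
    exact (Set.inter_eq_left.mpr hS).symm
  rw [h]
  exact hD.isClosedEmbedding_subtypeVal.isClosedMap _ (isClosed_discrete _)

/-- A Lindelöf subset of a discrete subspace is countable. -/
lemma aux_countable {X : Type*} [TopologicalSpace X] {D : Set X}
    [DiscreteTopology D] {S : Set X} (hS : S ⊆ D) (hL : IsLindelof S) : S.Countable := by
  have key : ∀ x : S, ∃ U : Set X, IsOpen U ∧ (x : X) ∈ U ∧ ∀ y ∈ U, y ∈ D → y = (x : X) := by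
    rintro ⟨x, hx⟩
    have hxD : x ∈ D := hS hx
    have hop : IsOpen ({⟨x, hxD⟩} : Set D) := isOpen_discrete _
    rw [isOpen_induced_iff] at hop
    obtain ⟨U, hU, hUeq⟩ := hop
    refine ⟨U, hU, ?_, ?_⟩
    · have : (⟨x, hxD⟩ : D) ∈ (Subtype.val ⁻¹' U : Set D) := by rw [hUeq]; rfl
      exact this
    · intro y hyU hyD
      have h2 : (⟨y, hyD⟩ : D) ∈ (Subtype.val ⁻¹' U : Set D) := hyU
      rw [hUeq] at h2
      exact congrArg Subtype.val h2
  choose U hUo hUx hUs using key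
  obtain ⟨r, hrc, hrs⟩ := hL.elim_countable_subcover U hUo
    (fun x hx => Set.mem_iUnion.mpr ⟨⟨x, hx⟩, hUx _⟩)
  have hsub : S ⊆ Subtype.val '' r := by
    intro x hx
    obtain ⟨i, hir, hxi⟩ := Set.mem_iUnion₂.mp (hrs hx)
    exact ⟨i, hir, (hUs i x hxi (hS hx)).symm⟩
  exact (hrc.image _).mono hsub

/-- A normal space in which every continuous real-valued function is constant
outside some Lindelöf subset is ω₁-compact: every closed discrete subspace is
at most countable. -/
theorem ec_normal_implies_omega1_compact {X : Type*} [TopologicalSpace X] [NormalSpace X]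
    (hEC : ∀ f : X → ℝ, Continuous f →
      ∃ Z : Set X, IsLindelof Z ∧ ∃ y : ℝ, ∀ x ∉ Z, f x = y) :
    ∀ D : Set X, IsClosed D → DiscreteTopology D → D.Countable := by
  intro D hD hDisc
  by_contra hunc
  -- split D into two uncountable pieces
  have hinf : Infinite D := by
    rw [Set.infinite_coe_iff]
    exact fun h => hunc h.countable
  have hadd : Cardinal.mk D + Cardinal.mk D = Cardinal.mk D :=
    Cardinal.add_eq_self (Cardinal.aleph0_le_mk D)
  have hne : Nonempty ((D ⊕ D) ≃ D) := by
    rw [← Cardinal.eq, Cardinal.mk_sum]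
    simp
  obtain ⟨e⟩ := hne
  set D₁ : Set X := Subtype.val '' (Set.range (e ∘ Sum.inl)) with hD₁def
  set D₂ : Set X := Subtype.val '' (Set.range (e ∘ Sum.inr)) with hD₂def
  have hD₁D : D₁ ⊆ D := by rintro x ⟨d, _, rfl⟩; exact d.2
  have hD₂D : D₂ ⊆ D := by rintro x ⟨d, _, rfl⟩; exact d.2
  have hdisj : Disjoint D₁ D₂ := by
    rw [Set.disjoint_left]
    rintro x ⟨d₁, ⟨a, ha⟩, rfl⟩ ⟨d₂, ⟨b, hb⟩, hval⟩
    have hdd : d₁ = d₂ := Subtype.ext hval.symm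
    rw [hdd, ← hb] at ha
    exact Sum.inl_ne_inr (e.injective ha)
  -- both pieces are uncountable
  have huncp : ∀ (g : D → D), Function.Injective g →
      ¬ (Subtype.val '' (Set.range g)).Countable := by
    intro g hg hc
    have : Countable (Subtype.val '' (Set.range g) : Set X) := hc.to_subtype
    have hinj : Function.Injective
        (fun d : D => (⟨((g d : D) : X), Set.mem_image_of_mem _ (Set.mem_range_self d)⟩ :
          (Subtype.val '' (Set.range g) : Set X))) := by
      intro a b hab
      exact hg (Subtype.ext (by simpa using hab))
    exact hunc (Set.countable_coe_iff.mp hinj.countable)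
  have hunc₁ : ¬ D₁.Countable := huncp _ (e.injective.comp Sum.inl_injective)
  have hunc₂ : ¬ D₂.Countable := huncp _ (e.injective.comp Sum.inr_injective)
  -- Urysohn function separating D₁ and D₂
  obtain ⟨f, hf0, hf1, _⟩ := exists_continuous_zero_one_of_isClosed
    (aux_subset_closed hD hD₁D) (aux_subset_closed hD hD₂D) hdisj
  obtain ⟨Z, hZ, y, hy⟩ := hEC f f.continuous
  -- one of the pieces is contained in Z
  have hcase : D₁ ⊆ Z ∨ D₂ ⊆ Z := by
    by_contra h
    push_neg at h
    obtain ⟨h1, h2⟩ := h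
    obtain ⟨x₁, hx₁, hx₁Z⟩ := Set.not_subset.mp h1
    obtain ⟨x₂, hx₂, hx₂Z⟩ := Set.not_subset.mp h2
    have h0 : f x₁ = 0 := hf0 hx₁
    have h1 : f x₂ = 1 := hf1 hx₂
    have e1 : f x₁ = y := hy x₁ hx₁Z
    have e2 : f x₂ = y := hy x₂ hx₂Z
    rw [h0] at e1; rw [h1] at e2
    exact zero_ne_one (e1.trans e2.symm)
  rcases hcase with h | h
  · exact hunc₁ (aux_countable hD₁D
      (inter_eq_self_of_subset_right h ▸ hZ.inter_right (aux_subset_closed hD hD₁D)))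
  · exact hunc₂ (aux_countable hD₂D
      (inter_eq_self_of_subset_right h ▸ hZ.inter_right (aux_subset_closed hD hD₂D)))
end

section
/- For u ∈ (0, 1/2), let f_u : [0,1] → [0,1] be the piecewise linear map taking values 0, 1/2+u, 1/2−u, 1 at 0, 1/3, 2/3, 1 respectively (linear in between). If u ≠ v (both in (0,1/2)), then there is no continuous r : [0,1] → [0,1] with f_u ∘ r = f_v. -/
/-- For `u ∈ (0, 1/2)`, the piecewise linear map `[0,1] → [0,1]` taking the
values `0, 1/2+u, 1/2-u, 1` at `0, 1/3, 2/3, 1`, linear in between. -/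
noncomputable def fpiece (u x : ℝ) : ℝ :=
  if x ≤ 1/3 then 3 * (1/2 + u) * x
  else if x ≤ 2/3 then (1/2 + u) - 6 * u * (x - 1/3)
  else (1/2 - u) + 3 * (1/2 + u) * (x - 2/3)

lemma fpiece_zero' (u : ℝ) : fpiece u 0 = 0 := by norm_num [fpiece]

lemma fpiece_one' (u : ℝ) : fpiece u 1 = 1 := by norm_num [fpiece]; ring

lemma fpiece_third (u : ℝ) : fpiece u (1/3) = 1/2 + u := by norm_num [fpiece]; ring

lemma fpiece_two_third (u : ℝ) : fpiece u (2/3) = 1/2 - u := by norm_num [fpiece]; ring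

lemma fpiece_ge (u : ℝ) (hu : u ∈ Set.Ioo (0 : ℝ) (1/2)) {x : ℝ}
    (hx : 1/3 ≤ x) (hx1 : x ≤ 1) : 1/2 - u ≤ fpiece u x := by
  obtain ⟨hu0, hu2⟩ := hu
  unfold fpiece
  split_ifs with h1 h2
  · have hx3 : x = 1/3 := le_antisymm h1 hx
    subst hx3; nlinarith
  · nlinarith
  · nlinarith

lemma fpiece_le (u : ℝ) (hu : u ∈ Set.Ioo (0 : ℝ) (1/2)) {x : ℝ}
    (hx0 : 0 ≤ x) (hx : x ≤ 2/3) : fpiece u x ≤ 1/2 + u := by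
  obtain ⟨hu0, hu2⟩ := hu
  unfold fpiece
  split_ifs with h1 h2 <;> nlinarith

lemma fpiece_eq_zero (u : ℝ) (hu : u ∈ Set.Ioo (0 : ℝ) (1/2)) {y : ℝ}
    (hy : y ∈ Set.Icc (0 : ℝ) 1) (h : fpiece u y = 0) : y = 0 := by
  obtain ⟨hu0, hu2⟩ := hu
  rcases le_or_gt y (1/3) with h3 | h3
  · have hform : fpiece u y = 3 * (1/2 + u) * y := by rw [fpiece, if_pos h3]
    rw [hform] at h
    have hle : y ≤ 0 := by nlinarith
    linarith [hy.1]
  · have := fpiece_ge u ⟨hu0, hu2⟩ h3.le hy.2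
    linarith

lemma fpiece_eq_one (u : ℝ) (hu : u ∈ Set.Ioo (0 : ℝ) (1/2)) {y : ℝ}
    (hy : y ∈ Set.Icc (0 : ℝ) 1) (h : fpiece u y = 1) : y = 1 := by
  obtain ⟨hu0, hu2⟩ := hu
  rcases le_or_gt y (2/3) with h3 | h3
  · have := fpiece_le u ⟨hu0, hu2⟩ hy.1 h3
    linarith
  · have h1 : ¬ y ≤ 1/3 := by linarith
    have h2 : ¬ y ≤ 2/3 := by linarith
    have hform : fpiece u y = (1/2 - u) + 3 * (1/2 + u) * (y - 2/3) := by
      rw [fpiece, if_neg h1, if_neg h2]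
    rw [hform] at h
    have hge : 1 ≤ y := by nlinarith
    linarith [hy.2]

lemma fpiece_mid (v : ℝ) (hv : v ∈ Set.Ioo (0 : ℝ) (1/2)) {x c : ℝ}
    (hx : x ∈ Set.Icc (1/3 : ℝ) (2/3)) (hc : c < 1/2 + v) (h : fpiece v x = c) :
    6 * v * (x - 1/3) = 1/2 + v - c := by
  have hx3 : 1/3 < x := by
    rcases eq_or_lt_of_le hx.1 with heq | hlt
    · exfalso
      rw [← heq, fpiece_third] at h
      linarith
    · exact hlt
  have h1 : ¬ x ≤ 1/3 := not_le.mpr hx3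
  have hform : fpiece v x = (1/2 + v) - 6 * v * (x - 1/3) := by
    rw [fpiece, if_neg h1, if_pos hx.2]
  rw [hform] at h
  linarith

/-- If `u ≠ v` in `(0, 1/2)`, there is no continuous `r : [0,1] → [0,1]` with
`f_u ∘ r = f_v`. -/
theorem no_factorization_fpiece {u v : ℝ}
    (hu : u ∈ Set.Ioo (0 : ℝ) (1/2)) (hv : v ∈ Set.Ioo (0 : ℝ) (1/2)) (huv : u ≠ v) :
    ¬ ∃ r : Set.Icc (0 : ℝ) 1 → Set.Icc (0 : ℝ) 1, Continuous r ∧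
      ∀ x : Set.Icc (0 : ℝ) 1, fpiece u (r x : ℝ) = fpiece v (x : ℝ) := by
  rintro ⟨r, hr, hfr⟩
  -- clamp to get a real-valued continuous function
  set proj : ℝ → Set.Icc (0 : ℝ) 1 := fun x =>
    ⟨min 1 (max 0 x), ⟨le_min zero_le_one (le_max_left 0 x), min_le_left _ _⟩⟩ with hproj
  set ρ : ℝ → ℝ := fun x => (r (proj x) : ℝ) with hρdef
  have hρcont : Continuous ρ := by
    apply continuous_subtype_val.comp
    apply hr.comp
    exact Continuous.subtype_mk (continuous_const.min (continuous_const.max continuous_id)) _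
  have hρ_mem : ∀ x, ρ x ∈ Set.Icc (0 : ℝ) 1 := fun x => (r (proj x)).2
  have hρ_eq : ∀ x, x ∈ Set.Icc (0 : ℝ) 1 → fpiece u (ρ x) = fpiece v x := by
    intro x hx
    have hpx : proj x = ⟨x, hx⟩ := by
      simp only [hproj]
      congr 1
      rw [max_eq_right hx.1, min_eq_right hx.2]
    show fpiece u ((r (proj x) : ℝ)) = fpiece v x
    rw [hpx]
    exact hfr ⟨x, hx⟩
  rcases lt_trichotomy u v with hlt | heq | hgt
  · -- case u < v
    have h13 : (1/3 : ℝ) ∈ Set.Icc (0 : ℝ) 1 := by norm_num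
    have h23 : (2/3 : ℝ) ∈ Set.Icc (0 : ℝ) 1 := by norm_num
    have e13 : fpiece u (ρ (1/3)) = 1/2 + v := by rw [hρ_eq _ h13, fpiece_third]
    have e23 : fpiece u (ρ (2/3)) = 1/2 - v := by rw [hρ_eq _ h23, fpiece_two_third]
    have hρ13 : 2/3 < ρ (1/3) := by
      by_contra hle
      push_neg at hle
      have := fpiece_le u hu (hρ_mem (1/3)).1 hle
      linarith
    have hρ23 : ρ (2/3) < 1/3 := by
      by_contra hle
      push_neg at hle
      have := fpiece_ge u hu hle (hρ_mem (2/3)).2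
      linarith
    obtain ⟨x₀, hx₀mem, hx₀⟩ := intermediate_value_Icc' (by norm_num : (1/3 : ℝ) ≤ 2/3)
      hρcont.continuousOn (Set.mem_Icc.mpr ⟨hρ23.le, by linarith⟩ :
        (1/3 : ℝ) ∈ Set.Icc (ρ (2/3)) (ρ (1/3)))
    have hx₀01 : x₀ ∈ Set.Icc (0 : ℝ) 1 := ⟨by linarith [hx₀mem.1], by linarith [hx₀mem.2]⟩
    have ev₀ : fpiece v x₀ = 1/2 + u := by rw [← hρ_eq _ hx₀01, hx₀, fpiece_third]
    have m₀ := fpiece_mid v hv hx₀mem (by linarith) ev₀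
    obtain ⟨x₂, hx₂mem, hx₂⟩ := intermediate_value_Icc' hx₀mem.1
      hρcont.continuousOn (Set.mem_Icc.mpr ⟨by rw [hx₀]; norm_num, hρ13.le⟩ :
        (2/3 : ℝ) ∈ Set.Icc (ρ x₀) (ρ (1/3)))
    have hx₂mem' : x₂ ∈ Set.Icc (1/3 : ℝ) (2/3) := ⟨hx₂mem.1, le_trans hx₂mem.2 hx₀mem.2⟩
    have hx₂01 : x₂ ∈ Set.Icc (0 : ℝ) 1 := ⟨by linarith [hx₂mem'.1], by linarith [hx₂mem'.2]⟩
    have ev₂ : fpiece v x₂ = 1/2 - u := by rw [← hρ_eq _ hx₂01, hx₂, fpiece_two_third]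
    have m₂ := fpiece_mid v hv hx₂mem' (by linarith [hu.1, hv.1]) ev₂
    have hle : x₂ ≤ x₀ := hx₂mem.2
    nlinarith [hv.1, hu.1, mul_le_mul_of_nonneg_left hle (by linarith [hv.1] : (0:ℝ) ≤ 6 * v)]
  · exact huv heq
  · -- case v < u
    have h0 : (0 : ℝ) ∈ Set.Icc (0 : ℝ) 1 := by norm_num
    have h1 : (1 : ℝ) ∈ Set.Icc (0 : ℝ) 1 := by norm_num
    have e0 : fpiece u (ρ 0) = 0 := by rw [hρ_eq _ h0, fpiece_zero']
    have e1 : fpiece u (ρ 1) = 1 := by rw [hρ_eq _ h1, fpiece_one']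
    have hρ0 : ρ 0 = 0 := fpiece_eq_zero u hu (hρ_mem 0) e0
    have hρ1 : ρ 1 = 1 := fpiece_eq_one u hu (hρ_mem 1) e1
    obtain ⟨x₀, hx₀mem, hx₀⟩ := intermediate_value_Icc (by norm_num : (0 : ℝ) ≤ 1)
      hρcont.continuousOn (by rw [hρ0, hρ1]; norm_num :
        (2/3 : ℝ) ∈ Set.Icc (ρ 0) (ρ 1))
    have ev₀ : fpiece v x₀ = 1/2 - u := by rw [← hρ_eq _ hx₀mem, hx₀, fpiece_two_third]
    have hx₀lt : x₀ < 1/3 := by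
      by_contra hge
      push_neg at hge
      have := fpiece_ge v hv hge hx₀mem.2
      linarith
    obtain ⟨x₁, hx₁mem, hx₁⟩ := intermediate_value_Icc hx₀mem.1
      hρcont.continuousOn (by rw [hρ0, hx₀]; norm_num :
        (1/3 : ℝ) ∈ Set.Icc (ρ 0) (ρ x₀))
    have hx₁01 : x₁ ∈ Set.Icc (0 : ℝ) 1 := ⟨hx₁mem.1, le_trans hx₁mem.2 hx₀mem.2⟩
    have ev₁ : fpiece v x₁ = 1/2 + u := by rw [← hρ_eq _ hx₁01, hx₁, fpiece_third]
    have hle : fpiece v x₁ ≤ 1/2 + v :=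
      fpiece_le v hv hx₁01.1 (by linarith [hx₁mem.2])
    linarith
end

section
/- Let X be a space which is the union of an increasing ω₁-chain ⟨H_α : α < ω₁⟩ of open subsets, each contained in a Lindelöf subset of X, and suppose X is countably compact. Then for every continuous map f : X → Y with Y metrizable, there exists α < ω₁ such that f(X − H_β) = f(X − H_α) for all β ≥ α. -/
/-!
Since `X` is countably compact, so are the closed sets `(H α)ᶜ` and their images under `f`; in
the metrizable space `Y` these images are therefore compact, and they all lie in the compact,
hence second countable, set `f '' univ`. In a second countable space every open cover has a
countable subcover, so the increasing ω₁-chain of relatively open complements of the images is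
already exhausted below some countable ordinal, because countable sets of countable ordinals are
bounded.
-/

open Set TopologicalSpace

theorem countablyCompactSet_iff_isCountablyCompact {X : Type*} [TopologicalSpace X]
    {s : Set X} : CountablyCompactSet s ↔ IsCountablyCompact s :=
  isCountablyCompact_iff_countable_open_cover.symm

theorem IsCountablyCompact.isCompact_of_pseudoMetrizableSpace {Y : Type*} [TopologicalSpace Y]
    [PseudoMetrizableSpace Y] {K : Set Y} (hK : IsCountablyCompact K) : IsCompact K :=
  hK.isSeqCompact.isCompact

theorem Set.Countable.bddAbove_of_lt_aleph_one_ord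
    {s : Set {o : Ordinal // o < (Cardinal.aleph 1).ord}} (hs : s.Countable) : BddAbove s := by
  have : Countable s := hs.to_subtype
  have hsup : ⨆ i : s, i.1.1 < (Cardinal.aleph 1).ord :=
    (Ordinal.iSup_lt_omega_one fun i => i.1.2.trans_eq (Cardinal.ord_aleph 1)).trans_eq
      (Cardinal.ord_aleph 1).symm
  exact ⟨⟨_, hsup⟩, fun i hi => Ordinal.le_iSup (fun i : s => i.1.1) ⟨i, hi⟩⟩

section Stabilization

variable {Z ι : Type*} [TopologicalSpace Z] [Preorder ι]

theorem Monotone.exists_forall_ge_eq_of_isOpen [SecondCountableTopology Z]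
    (hbdd : ∀ s : Set ι, s.Countable → BddAbove s) {U : ι → Set Z} (hU : Monotone U)
    (hUo : ∀ i, IsOpen (U i)) : ∃ γ, ∀ β, γ ≤ β → U β = U γ := by
  obtain ⟨T, hTc, hTU⟩ := isOpen_iUnion_countable U hUo
  obtain ⟨γ, hγ⟩ := hbdd T hTc
  refine ⟨γ, fun β hβ => (hU hβ).antisymm' ?_⟩
  calc U β ⊆ ⋃ i, U i := subset_iUnion U β
    _ = ⋃ i ∈ T, U i := hTU.symm
    _ ⊆ U γ := iUnion₂_subset fun i hi => hU (hγ hi)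

theorem Antitone.exists_forall_ge_eq_of_subset {S : Set Z} [SecondCountableTopology S]
    (hbdd : ∀ s : Set ι, s.Countable → BddAbove s) {K : ι → Set Z} (hK : Antitone K)
    (hKc : ∀ i, IsClosed (K i)) (hKS : ∀ i, K i ⊆ S) : ∃ γ, ∀ β, γ ≤ β → K β = K γ := by
  obtain ⟨γ, hγ⟩ := Monotone.exists_forall_ge_eq_of_isOpen hbdd
    (U := fun i => ((↑) ⁻¹' K i : Set S)ᶜ)
    (fun _ _ h => compl_subset_compl.2 (preimage_mono (hK h)))
    (fun i => ((hKc i).preimage continuous_subtype_val).isOpen_compl)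
  refine ⟨γ, fun β hβ => ?_⟩
  have hpre := congrArg (fun t : Set S => Subtype.val '' t) (compl_injective (hγ β hβ))
  simpa only [Subtype.image_preimage_coe, inter_eq_right.2 (hKS _)] using hpre

end Stabilization

theorem complements_images_stabilize_general {X Y : Type*} [TopologicalSpace X]
    [TopologicalSpace Y] [TopologicalSpace.MetrizableSpace Y]
    (H : {o : Ordinal // o < (Cardinal.aleph 1).ord} → Set X)
    (hopen : ∀ α, IsOpen (H α))
    (hmono : ∀ α β, α ≤ β → H α ⊆ H β)
    (hcc : CountablyCompactSet (Set.univ : Set X))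
    (f : X → Y) (hf : Continuous f) :
    ∃ α, ∀ β, α ≤ β → f '' (H β)ᶜ = f '' (H α)ᶜ := by
  have : CountablyCompactSpace X :=
    isCountablyCompact_univ_iff.1 (countablyCompactSet_iff_isCountablyCompact.1 hcc)
  have hcompact : ∀ s : Set X, IsClosed s → IsCompact (f '' s) := fun s hs =>
    (hs.isCountablyCompact.image hf).isCompact_of_pseudoMetrizableSpace
  have : CompactSpace (f '' univ) := isCompact_iff_compactSpace.1 (hcompact univ isClosed_univ)
  exact Antitone.exists_forall_ge_eq_of_subset (S := f '' univ)
    (fun _ hs => hs.bddAbove_of_lt_aleph_one_ord)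
    (fun α β h => image_mono (compl_subset_compl.2 (hmono α β h)))
    (fun α => (hcompact _ (hopen α).isClosed_compl).isClosed)
    (fun α => image_mono (subset_univ _))

/-- If a countably compact space `X` is the union of a strictly increasing
ω₁-chain of open sets, each contained in a Lindelöf set, then for any continuous
map `f` to a metrizable space the images of the complements stabilize. -/
theorem complements_images_stabilize {X Y : Type*} [TopologicalSpace X]
    [TopologicalSpace Y] [TopologicalSpace.MetrizableSpace Y]
    (H : {o : Ordinal // o < (Cardinal.aleph 1).ord} → Set X)
    (hopen : ∀ α, IsOpen (H α))
    (hmono : ∀ α β, α ≤ β → H α ⊆ H β)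
    (hstrict : ∀ α β, α < β → H α ≠ H β)
    (hLind : ∀ α, ∃ L : Set X, IsLindelof L ∧ H α ⊆ L)
    (hcov : (⋃ α, H α) = Set.univ)
    (hcc : CountablyCompactSet (Set.univ : Set X))
    (f : X → Y) (hf : Continuous f) :
    ∃ α, ∀ β, α ≤ β → f '' (H β)ᶜ = f '' (H α)ᶜ :=
  complements_images_stabilize_general H hopen hmono hcc f hf
end
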